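/- arXiv:2105.09185 — 4 statements merged into one kernel-verified Lean document; each statement's English description precedes it below -/
import Mathlib

section
/- Let ζ ∈ [0,1), r > 1, p ≥ 2 and t ≥ 0, and for s ∈ [0,t] set r_s = e^{(1−ζ)(τ_t − τ_s)} r. Then ∫₀^t (r_s/(r_s − 1))^p ds ≤ (2(1+t)/(1−ζ)) (r/(r−1))^{p−1}. -/
/-!
Write `y_s = r_s / (r_s - 1)`. Since `dτ_s/ds = 1/(1 + ζ s)`, `y` solves the logistic equation
`y' = (1 - ζ)/(1 + ζ s) · y (y - 1)`, whose rate is at least `κ = (1 - ζ)/(1 + ζ t)` on `[0, t]`,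
and `y ≥ 1` there. Convexity of `x ↦ x ^ p` gives `y ^ p ≤ 1 + p y ^ (p - 1) (y - 1)`, which is at
most the derivative of `s + p/((p - 1) κ) · y_s ^ (p - 1)`. Integrating, and using `y_t = r/(r - 1)`
and `y_0 ≥ 1`, bounds the integral by `t + p (1 + ζ t)/((p - 1)(1 - ζ)) · ((r/(r - 1)) ^ (p - 1) - 1)`.
-/

open Complex

noncomputable def tauLK (ζ t : ℝ) : ℝ := if ζ = 0 then t else ζ⁻¹ * Real.log (1 + ζ * t)

open Set

lemma hasDerivAt_tauLK {ζ s : ℝ} (hs : 1 + ζ * s ≠ 0) :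
    HasDerivAt (tauLK ζ) (1 + ζ * s)⁻¹ s := by
  rcases eq_or_ne ζ 0 with rfl | hζ
  · have : tauLK 0 = id := funext fun u => by simp [tauLK]
    simpa [this] using hasDerivAt_id s
  · have hlog : HasDerivAt (fun u => Real.log (1 + ζ * u)) (ζ / (1 + ζ * s)) s := by
      simpa using (((hasDerivAt_id s).const_mul ζ).const_add 1).log hs
    rw [show tauLK ζ = fun u => ζ⁻¹ * Real.log (1 + ζ * u) from funext fun u => if_neg hζ]
    exact (hlog.const_mul ζ⁻¹).congr_deriv (by field_simp)

lemma tauLK_monotoneOn {ζ : ℝ} (hζ : 0 ≤ ζ) : MonotoneOn (tauLK ζ) (Ici 0) := by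
  intro s hs u _ hsu
  rcases hζ.eq_or_lt with rfl | hζ
  · simpa [tauLK] using hsu
  · simp only [tauLK, hζ.ne', if_false]
    have : 0 < 1 + ζ * s := by have := mem_Ici.1 hs; positivity
    gcongr

lemma rpow_sub_one_le_mul_rpow_sub_one_mul_sub_one {y p : ℝ} (hy : 0 < y) (hp : 1 ≤ p) :
    y ^ p - 1 ≤ p * y ^ (p - 1) * (y - 1) := by
  have hbern := one_add_mul_self_le_rpow_one_add (s := y⁻¹ - 1) (by linarith [inv_pos.2 hy]) hp
  rw [add_sub_cancel, Real.inv_rpow hy.le] at hbern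
  have hyp : 0 < y ^ p := Real.rpow_pos_of_pos hy p
  have key := mul_le_mul_of_nonneg_right hbern hyp.le
  rw [inv_mul_cancel₀ hyp.ne'] at key
  rw [Real.rpow_sub_one hy.ne', div_eq_mul_inv]
  linear_combination key - p * y ^ p * inv_mul_cancel₀ hy.ne'

lemma HasDerivAt.div_sub_one {ρ : ℝ → ℝ} {k s : ℝ} (hρ : HasDerivAt ρ (-k * ρ s) s)
    (hs : ρ s ≠ 1) :
    HasDerivAt (fun u => ρ u / (ρ u - 1))
      (k * (ρ s / (ρ s - 1) * (ρ s / (ρ s - 1) - 1))) s := by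
  have hs' : ρ s - 1 ≠ 0 := sub_ne_zero.2 hs
  refine (hρ.div (hρ.sub_const 1) hs').congr_deriv ?_
  field_simp
  ring

lemma integral_rpow_le_of_hasDerivAt_logistic {y k : ℝ → ℝ} {a b κ p : ℝ} (hab : a ≤ b)
    (hp : 1 < p) (hκ : 0 < κ) (hy : ∀ s ∈ Icc a b, 1 ≤ y s) (hk : ∀ s ∈ Icc a b, κ ≤ k s)
    (hderiv : ∀ s ∈ Icc a b, HasDerivAt y (k s * (y s * (y s - 1))) s) :
    ∫ s in a..b, y s ^ p ≤ b - a + p / (p - 1) / κ * (y b ^ (p - 1) - y a ^ (p - 1)) := by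
  have hp1 : 0 < p - 1 := sub_pos.2 hp
  have hC : p / (p - 1) / κ * (p - 1) * κ = p := by field_simp
  have hC0 : 0 ≤ p / (p - 1) / κ := by positivity
  set C := p / (p - 1) / κ
  have hy0 : ∀ s ∈ Icc a b, y s ≠ 0 := fun s hs => (zero_lt_one.trans_le (hy s hs)).ne'
  have hF : ∀ s ∈ Icc a b, HasDerivAt (fun u => u + C * y u ^ (p - 1))
      (1 + C * (k s * (y s * (y s - 1)) * (p - 1) * y s ^ (p - 1 - 1))) s := fun s hs =>
    (hasDerivAt_id s).add (((hderiv s hs).rpow_const (Or.inl (hy0 s hs))).const_mul C)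
  have hycont : ContinuousOn y (Icc a b) := fun s hs =>
    (hderiv s hs).continuousAt.continuousWithinAt
  have hle : ∀ s ∈ Ioo a b,
      y s ^ p ≤ 1 + C * (k s * (y s * (y s - 1)) * (p - 1) * y s ^ (p - 1 - 1)) := by
    intro s hs
    have hs := Ioo_subset_Icc_self hs
    have hys := hy s hs
    have hrate : p ≤ C * (p - 1) * k s := calc
      p = C * (p - 1) * κ := hC.symm
      _ ≤ C * (p - 1) * k s := by gcongr; exact hk s hs
    calc y s ^ p ≤ 1 + p * y s ^ (p - 1) * (y s - 1) := by
          linarith [rpow_sub_one_le_mul_rpow_sub_one_mul_sub_one (by positivity : 0 < y s) hp.le]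
      _ ≤ 1 + C * (p - 1) * k s * y s ^ (p - 1) * (y s - 1) := by gcongr
      _ = _ := by
          rw [Real.rpow_sub_one (hy0 s hs) (p - 1)]
          field_simp
  have := intervalIntegral.integral_le_sub_of_hasDeriv_right_of_le hab
    (fun s hs => (hF s hs).continuousAt.continuousWithinAt)
    (fun s hs => (hF s (Ioo_subset_Icc_self hs)).hasDerivWithinAt)
    ((hycont.rpow_const fun s hs => Or.inl (hy0 s hs)).integrableOn_Icc) hle
  linarith

noncomputable def radiusLK (ζ r t s : ℝ) : ℝ := Real.exp ((1 - ζ) * (tauLK ζ t - tauLK ζ s)) * r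

noncomputable def ratioLK (ζ r t s : ℝ) : ℝ := radiusLK ζ r t s / (radiusLK ζ r t s - 1)

section radius

variable {ζ r t s : ℝ}

lemma radiusLK_self : radiusLK ζ r t t = r := by simp [radiusLK]

lemma le_radiusLK (hζ0 : 0 ≤ ζ) (hζ1 : ζ ≤ 1) (hr : 0 ≤ r) (hs : 0 ≤ s) (hst : s ≤ t) :
    r ≤ radiusLK ζ r t s := by
  have hτ : tauLK ζ s ≤ tauLK ζ t := tauLK_monotoneOn hζ0 hs (hs.trans hst) hst
  have : 1 ≤ Real.exp ((1 - ζ) * (tauLK ζ t - tauLK ζ s)) :=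
    Real.one_le_exp (mul_nonneg (sub_nonneg.2 hζ1) (sub_nonneg.2 hτ))
  simpa [radiusLK] using mul_le_mul_of_nonneg_right this hr

lemma hasDerivAt_radiusLK (hs : 1 + ζ * s ≠ 0) :
    HasDerivAt (radiusLK ζ r t) (-((1 - ζ) / (1 + ζ * s)) * radiusLK ζ r t s) s := by
  refine ((((hasDerivAt_tauLK hs).const_sub (tauLK ζ t)).const_mul (1 - ζ)).exp.mul_const
    r).congr_deriv ?_
  simp only [radiusLK]
  ring

lemma ratioLK_self : ratioLK ζ r t t = r / (r - 1) := by simp only [ratioLK, radiusLK_self]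

lemma one_le_ratioLK (hζ0 : 0 ≤ ζ) (hζ1 : ζ ≤ 1) (hr : 1 < r) (hs : 0 ≤ s) (hst : s ≤ t) :
    1 ≤ ratioLK ζ r t s := by
  have := le_radiusLK hζ0 hζ1 (zero_le_one.trans hr.le) hs hst
  rw [ratioLK, one_le_div₀ (by linarith)]
  linarith

lemma hasDerivAt_ratioLK (hζ0 : 0 ≤ ζ) (hζ1 : ζ ≤ 1) (hr : 1 < r) (hs : 0 ≤ s) (hst : s ≤ t) :
    HasDerivAt (ratioLK ζ r t)
      ((1 - ζ) / (1 + ζ * s) * (ratioLK ζ r t s * (ratioLK ζ r t s - 1))) s := by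
  have hρ := le_radiusLK hζ0 hζ1 (zero_le_one.trans hr.le) hs hst
  exact (hasDerivAt_radiusLK (by positivity)).div_sub_one (by linarith)

end radius

lemma div_sub_one_div_le_two_mul_div {ζ p t : ℝ} (hζ0 : 0 ≤ ζ) (hζ1 : ζ < 1) (hp : 2 ≤ p)
    (ht : 0 ≤ t) : p / (p - 1) / ((1 - ζ) / (1 + ζ * t)) ≤ 2 * (1 + t) / (1 - ζ) := by
  have hζ : 0 < 1 - ζ := sub_pos.2 hζ1
  calc p / (p - 1) / ((1 - ζ) / (1 + ζ * t)) = p / (p - 1) * ((1 + ζ * t) / (1 - ζ)) := by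
        rw [div_div_eq_mul_div, mul_div_assoc]
    _ ≤ 2 * ((1 + t) / (1 - ζ)) := by
      gcongr
      · rw [div_le_iff₀ (by linarith)]; linarith
      · exact mul_le_of_le_one_left ht hζ1.le
    _ = 2 * (1 + t) / (1 - ζ) := by ring

/-- Push-out estimate, case `ζ ∈ [0,1)`, `p ≥ 2`:
with `r_s = e^{(1-ζ)(τ_t - τ_s)} r`,
`∫₀^t (r_s/(r_s-1))^p ds ≤ (2(1+t)/(1-ζ)) (r/(r-1))^{p-1}`. -/
theorem stmt5 (ζ r p t : ℝ) (hζ0 : 0 ≤ ζ) (hζ1 : ζ < 1) (hr : 1 < r) (hp : 2 ≤ p)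
    (ht : 0 ≤ t) :
    (∫ s in (0:ℝ)..t,
        (Real.exp ((1 - ζ) * (tauLK ζ t - tauLK ζ s)) * r /
            (Real.exp ((1 - ζ) * (tauLK ζ t - tauLK ζ s)) * r - 1)) ^ p)
      ≤ 2 * (1 + t) / (1 - ζ) * (r / (r - 1)) ^ (p - 1) := by
  show ∫ s in (0:ℝ)..t, ratioLK ζ r t s ^ p ≤ _
  have hκ : 0 < (1 - ζ) / (1 + ζ * t) := by have := sub_pos.2 hζ1; positivity
  have hint := integral_rpow_le_of_hasDerivAt_logistic (p := p) ht (by linarith) hκ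
    (fun s hs => one_le_ratioLK hζ0 hζ1.le hr hs.1 hs.2)
    (fun s hs => by have := hs.1; gcongr; exact hs.2)
    (fun s hs => hasDerivAt_ratioLK hζ0 hζ1.le hr hs.1 hs.2)
  rw [ratioLK_self, sub_zero] at hint
  have hC0 : 0 ≤ p / (p - 1) / ((1 - ζ) / (1 + ζ * t)) :=
    div_nonneg (div_nonneg (by linarith) (by linarith)) hκ.le
  have htB : t ≤ 2 * (1 + t) / (1 - ζ) := by rw [le_div_iff₀ (sub_pos.2 hζ1)]; nlinarith
  have hK : 1 ≤ (r / (r - 1)) ^ (p - 1) :=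
    Real.one_le_rpow (ratioLK_self ▸ one_le_ratioLK hζ0 hζ1.le hr ht le_rfl) (by linarith)
  have hy0 : 1 ≤ ratioLK ζ r t 0 ^ (p - 1) :=
    Real.one_le_rpow (one_le_ratioLK hζ0 hζ1.le hr le_rfl ht) (by linarith)
  calc _ ≤ _ := hint
    _ ≤ t + p / (p - 1) / ((1 - ζ) / (1 + ζ * t)) * ((r / (r - 1)) ^ (p - 1) - 1) := by gcongr
    _ ≤ t + 2 * (1 + t) / (1 - ζ) * ((r / (r - 1)) ^ (p - 1) - 1) := by
      gcongr t + ?_ * _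
      exact div_sub_one_div_le_two_mul_div hζ0 hζ1 hp ht
    _ ≤ 2 * (1 + t) / (1 - ζ) * (r / (r - 1)) ^ (p - 1) := by linarith
end

section
/- Let ζ ∈ [0,1), r > 1 and t ≥ 0, and for s ∈ [0,t] set r_s = e^{(1−ζ)(τ_t − τ_s)} r. Then ∫₀^t (r_s/(r_s − 1)) ds ≤ (2(1+t)/(1−ζ)) (1 + log(r/(r−1))). -/
open Complex

/-!
Put `w s = (1 - ζ) (τ_t - τ_s) ≥ 0`. Since `τ' s = 1 / (1 + ζ s) ≥ 1 / (1 + ζ t)` on `[0, t]`,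
`w` decreases at rate at least `c = (1 - ζ) / (1 + ζ t)`. The integrand is `1 + 1 / (r e^w - 1)`,
and `s ↦ s - c⁻¹ log (r - e^{-w s})` has derivative at least the integrand, so the integral is at
most `t + c⁻¹ log (r / (r - 1))`.
-/

open Set

lemma tauLK_hasDerivAt (ζ s : ℝ) (h : 0 < 1 + ζ * s) :
    HasDerivAt (tauLK ζ) (1 + ζ * s)⁻¹ s := by
  rcases eq_or_ne ζ 0 with rfl | hζ
  · have : tauLK 0 = id := funext fun x => by simp [tauLK]
    simpa [this] using hasDerivAt_id s
  · have : tauLK ζ = fun x => ζ⁻¹ * Real.log (1 + ζ * x) := funext fun x => by simp [tauLK, hζ]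
    rw [this]
    exact (((((hasDerivAt_id' s).const_mul ζ).const_add 1).log h.ne').const_mul ζ⁻¹).congr_deriv
      (by field_simp)

lemma integral_exp_mul_div_exp_mul_sub_one_le {w w' : ℝ → ℝ} {a b r c : ℝ} (hab : a ≤ b)
    (hr : 1 < r) (hc : 0 < c) (hw : ContinuousOn w (Icc a b))
    (hw_deriv : ∀ x ∈ Ioo a b, HasDerivAt w (w' x) x) (hw' : ∀ x ∈ Ioo a b, w' x ≤ -c)
    (hw0 : ∀ x ∈ Icc a b, 0 ≤ w x) :
    ∫ x in a..b, Real.exp (w x) * r / (Real.exp (w x) * r - 1) ≤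
      b - a + Real.log (r / (r - 1)) / c := by
  have hden : ∀ x ∈ Icc a b, 0 < Real.exp (w x) * r - 1 := fun x hx => by
    nlinarith [Real.one_le_exp (hw0 x hx)]
  have hlog_arg : ∀ x ∈ Icc a b, 0 < r - Real.exp (-w x) := fun x hx => by
    have := Real.exp_le_one_iff.2 (neg_nonpos.2 (hw0 x hx)); linarith
  set G : ℝ → ℝ := fun x => x - c⁻¹ * Real.log (r - Real.exp (-w x))
  have hG : ContinuousOn G (Icc a b) :=
    continuousOn_id.sub (continuousOn_const.mul <| ContinuousOn.log
      (continuousOn_const.sub (hw.neg.rexp)) fun x hx => (hlog_arg x hx).ne')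
  have hG_deriv : ∀ x ∈ Ioo a b,
      HasDerivAt G (1 - c⁻¹ * (-(Real.exp (-w x) * -w' x) / (r - Real.exp (-w x)))) x :=
    fun x hx => (hasDerivAt_id x).sub <| ((((hw_deriv x hx).fun_neg.exp).const_sub r).log
      (hlog_arg x (Ioo_subset_Icc_self hx)).ne').const_mul c⁻¹
  have hint : MeasureTheory.IntegrableOn
      (fun x => Real.exp (w x) * r / (Real.exp (w x) * r - 1)) (Icc a b) :=
    ContinuousOn.integrableOn_Icc <| (hw.rexp.mul continuousOn_const).div
      ((hw.rexp.mul continuousOn_const).sub continuousOn_const) fun x hx => (hden x hx).ne'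
  calc ∫ x in a..b, Real.exp (w x) * r / (Real.exp (w x) * r - 1) ≤ G b - G a := by
        refine intervalIntegral.integral_le_sub_of_hasDeriv_right_of_le hab hG
          (fun x hx => (hG_deriv x hx).hasDerivWithinAt) hint fun x hx => ?_
        have hx' := Ioo_subset_Icc_self hx
        have hpos := hden x hx'
        have hcoef : 1 ≤ -w' x / c := by rw [le_div_iff₀ hc]; linarith [hw' x hx]
        calc Real.exp (w x) * r / (Real.exp (w x) * r - 1)
            = 1 + (Real.exp (w x) * r - 1)⁻¹ := by field_simp; ring
          _ ≤ 1 + -w' x / c * (Real.exp (w x) * r - 1)⁻¹ := by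
            gcongr; exact le_mul_of_one_le_left (inv_nonneg.2 hpos.le) hcoef
          _ = _ := by
            have := hlog_arg x hx'
            rw [Real.exp_neg] at this ⊢
            field_simp
            ring
    _ ≤ b - a + Real.log (r / (r - 1)) / c := by
        have hb := right_mem_Icc.2 hab
        have ha := left_mem_Icc.2 hab
        have hlog_a : Real.log (r - Real.exp (-w a)) ≤ Real.log r :=
          Real.log_le_log (hlog_arg a ha) (by linarith [Real.exp_pos (-w a)])
        have hlog_b : Real.log (r - 1) ≤ Real.log (r - Real.exp (-w b)) := by
          have := Real.exp_le_one_iff.2 (neg_nonpos.2 (hw0 b hb))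
          exact Real.log_le_log (by linarith) (by linarith)
        rw [Real.log_div (by positivity) (by linarith), div_eq_inv_mul]
        simp only [G]
        nlinarith [inv_pos.2 hc]

/-- Push-out estimate, case `ζ ∈ [0,1)`, `p = 1`:
with `r_s = e^{(1-ζ)(τ_t - τ_s)} r`,
`∫₀^t (r_s/(r_s-1)) ds ≤ (2(1+t)/(1-ζ)) (1 + log(r/(r-1)))`. -/
theorem stmt6 (ζ r t : ℝ) (hζ0 : 0 ≤ ζ) (hζ1 : ζ < 1) (hr : 1 < r) (ht : 0 ≤ t) :
    (∫ s in (0:ℝ)..t,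
        Real.exp ((1 - ζ) * (tauLK ζ t - tauLK ζ s)) * r /
          (Real.exp ((1 - ζ) * (tauLK ζ t - tauLK ζ s)) * r - 1))
      ≤ 2 * (1 + t) / (1 - ζ) * (1 + Real.log (r / (r - 1))) := by
  have ha : 0 < 1 - ζ := by linarith
  have hbase : ∀ s ∈ Icc 0 t, 0 < 1 + ζ * s := fun s hs =>
    add_pos_of_pos_of_nonneg one_pos (mul_nonneg hζ0 hs.1)
  have hw_deriv : ∀ s ∈ Icc 0 t, HasDerivAt (fun s => (1 - ζ) * (tauLK ζ t - tauLK ζ s))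
      (-((1 - ζ) / (1 + ζ * s))) s := fun s hs =>
    (((tauLK_hasDerivAt ζ s (hbase s hs)).const_sub _).const_mul (1 - ζ)).congr_deriv (by ring)
  have hL : 0 ≤ Real.log (r / (r - 1)) :=
    Real.log_nonneg <| (le_div_iff₀ (by linarith)).2 (by linarith)
  calc _ ≤ t - 0 + Real.log (r / (r - 1)) / ((1 - ζ) / (1 + ζ * t)) := by
        refine integral_exp_mul_div_exp_mul_sub_one_le ht hr (div_pos ha (hbase t ⟨ht, le_rfl⟩))
          (fun s hs => (hw_deriv s hs).continuousAt.continuousWithinAt)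
          (fun s hs => hw_deriv s (Ioo_subset_Icc_self hs)) (fun s hs => ?_) fun s hs =>
          mul_nonneg ha.le (sub_nonneg.2 (tauLK_monotoneOn hζ0 hs.1 (hs.1.trans hs.2) hs.2))
        have := hbase s (Ioo_subset_Icc_self hs)
        gcongr
        exact hs.2.le
    _ ≤ 2 * (1 + t) / (1 - ζ) * (1 + Real.log (r / (r - 1))) := by
        rw [div_div_eq_mul_div, div_mul_eq_mul_div, sub_zero, add_div' _ _ _ ha.ne']
        gcongr
        nlinarith [mul_nonneg hL (mul_nonneg (sub_nonneg.2 hζ1.le) ht), mul_nonneg hζ0 ht]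
end

section
/- Let ζ < 0, r > 1 and t ∈ [0, t_ζ), and for s ∈ [0,t] set r_s = e^{τ_t − τ_s} r. Then for every p ≥ 2, ∫₀^t (r_s/(r_s − 1))^p ds ≤ 2(1+t) (r/(r−1))^{p−1}, and moreover ∫₀^t (r_s/(r_s − 1)) ds ≤ 2(1+t)(1 + log(r/(r−1))). -/
/-!
For `ζ < 0` the time change has `τ' = (1 + ζ s)⁻¹ ≥ 1`, so `τ_t - τ_s ≥ t - s` and
`r_s ≥ e^{t - s} r ≥ r (1 + (t - s))`. As `x ↦ x / (x - 1)` decreases on `(1, ∞)`, the integrand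
is bounded by its value `g(s) = 1 + (r (1 + (t - s)) - 1)⁻¹` at this lower bound, and `g ≤ r / (r - 1)`.
Both `g` and `g²` have elementary antiderivatives, which gives the case `p = 1`; for `p ≥ 2` one
bounds `f^p ≤ (r / (r - 1))^(p - 2) g²`. The remaining logarithms are controlled by
`log y ≤ y - 1` and `log y ≤ y / 2`.
-/

open Complex

open Set intervalIntegral

lemma Real.log_le_half_self {y : ℝ} (hy : 0 < y) : Real.log y ≤ y / 2 := by
  have h₁ := Real.log_le_sub_one_of_pos (half_pos hy)
  have h₂ := Real.log_le_sub_one_of_pos two_pos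
  rw [Real.log_div hy.ne' two_ne_zero] at h₁
  linarith

lemma div_sub_one_le_one_add_inv {x y : ℝ} (hy : 1 < y) (hyx : y ≤ x) :
    x / (x - 1) ≤ 1 + (y - 1)⁻¹ := by
  have hx : x - 1 ≠ 0 := by linarith
  rw [show x / (x - 1) = 1 + (x - 1)⁻¹ by field_simp; ring]
  gcongr

section TimeChange

variable {ζ s t : ℝ}

lemma continuousOn_tauLK (ζ : ℝ) : ContinuousOn (tauLK ζ) {s | 1 + ζ * s ≠ 0} := by
  unfold tauLK
  split_ifs
  · exact continuousOn_id
  · exact continuousOn_const.mul <|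
      (continuous_const.add (continuous_const.mul continuous_id)).continuousOn.log fun _ h => h

lemma one_add_mul_pos_of_lt_abs_inv (hζ : ζ < 0) (ht : t < |ζ|⁻¹) : 0 < 1 + ζ * t := by
  rw [abs_of_neg hζ] at ht
  have h := mul_lt_mul_of_pos_left ht (neg_pos.2 hζ)
  rw [mul_inv_cancel₀ (neg_ne_zero.2 hζ.ne)] at h
  linarith

-- `log x ≤ x - 1` at `x = (1 + ζ t) / (1 + ζ s)` replaces the mean value theorem for `τ' ≥ 1`.
lemma sub_le_tauLK_sub (hζ : ζ < 0) (hs : 0 ≤ s) (hst : s ≤ t) (ht : 0 < 1 + ζ * t) :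
    t - s ≤ tauLK ζ t - tauLK ζ s := by
  have hs' : 0 < 1 + ζ * s := by nlinarith
  have hlog := Real.log_le_sub_one_of_pos (div_pos ht hs')
  rw [Real.log_div ht.ne' hs'.ne', div_sub_one hs'.ne'] at hlog
  have hquot : t - s ≤ (t - s) / (1 + ζ * s) := by
    rw [le_div_iff₀ hs']
    nlinarith [mul_nonneg hs (sub_nonneg.2 hst)]
  have hscale := mul_le_mul_of_nonpos_left hlog (inv_nonpos.2 hζ.le)
  rw [show ζ⁻¹ * ((1 + ζ * t - (1 + ζ * s)) / (1 + ζ * s)) = (t - s) / (1 + ζ * s) by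
    rw [add_sub_add_left_eq_sub, ← mul_sub, mul_div_assoc, inv_mul_cancel_left₀ hζ.ne]] at hscale
  simp only [tauLK, if_neg hζ.ne, ← mul_sub]
  linarith

lemma one_add_sub_le_exp_tauLK_sub (hζ : ζ < 0) (hs : 0 ≤ s) (hst : s ≤ t) (ht : 0 < 1 + ζ * t) :
    1 + (t - s) ≤ Real.exp (tauLK ζ t - tauLK ζ s) := by
  linarith [Real.add_one_le_exp (tauLK ζ t - tauLK ζ s), sub_le_tauLK_sub hζ hs hst ht]

end TimeChange

lemma one_lt_mul_one_add {r x : ℝ} (hr : 1 < r) (hx : 0 ≤ x) : 1 < r * (1 + x) := by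
  nlinarith

-- The value of `x ↦ x / (x - 1)` at the lower bound `r (1 + (t - s))` of `r_s`.
noncomputable def pushOutMajorant (r t s : ℝ) : ℝ := 1 + (r * (1 + (t - s)) - 1)⁻¹

section PushOutMajorant

variable {r t : ℝ}

lemma pushOutMajorant_le (hr : 1 < r) {s : ℝ} (hs : s ≤ t) :
    pushOutMajorant r t s ≤ r / (r - 1) := by
  have hr₁ : r - 1 ≠ 0 := by linarith
  rw [pushOutMajorant, show r / (r - 1) = 1 + (r - 1)⁻¹ by field_simp; ring]
  gcongr
  nlinarith [sub_nonneg.2 hs]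

lemma continuousOn_pushOutMajorant (hr : 1 < r) :
    ContinuousOn (pushOutMajorant r t) (Iic t) := by
  refine continuousOn_const.add (ContinuousOn.inv₀ (by fun_prop) fun s hs => ?_)
  have := one_lt_mul_one_add hr (sub_nonneg.2 (mem_Iic.1 hs))
  linarith

lemma hasDerivAt_pushOutMajorant_denom (s : ℝ) :
    HasDerivAt (fun x => r * (1 + (t - x)) - 1) (-r) s := by
  simpa using (((hasDerivAt_id s).const_sub t).const_add 1).const_mul r |>.sub_const 1

lemma integral_pushOutMajorant (hr : 1 < r) (ht : 0 ≤ t) :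
    ∫ s in 0..t, pushOutMajorant r t s
      = t + r⁻¹ * (Real.log (r * (1 + t) - 1) - Real.log (r - 1)) := by
  have hderiv : ∀ s ∈ uIcc 0 t, HasDerivAt
      (fun x => x - r⁻¹ * Real.log (r * (1 + (t - x)) - 1)) (pushOutMajorant r t s) s := by
    intro s hs
    rw [uIcc_of_le ht] at hs
    have hu : r * (1 + (t - s)) - 1 ≠ 0 := by
      have := one_lt_mul_one_add hr (sub_nonneg.2 hs.2); linarith
    refine ((hasDerivAt_id' s).sub (((hasDerivAt_pushOutMajorant_denom s).log hu).const_mul r⁻¹)).congr_deriv ?_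
    rw [pushOutMajorant]
    field_simp
    ring
  rw [integral_eq_sub_of_hasDerivAt hderiv
    ((continuousOn_pushOutMajorant hr).mono Icc_subset_Iic_self |>.intervalIntegrable_of_Icc ht)]
  simp only [sub_self, sub_zero, add_zero, mul_one]
  ring

lemma integral_pushOutMajorant_sq (hr : 1 < r) (ht : 0 ≤ t) :
    ∫ s in 0..t, pushOutMajorant r t s ^ 2
      = t + 2 * r⁻¹ * (Real.log (r * (1 + t) - 1) - Real.log (r - 1))
        + r⁻¹ * ((r - 1)⁻¹ - (r * (1 + t) - 1)⁻¹) := by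
  have hderiv : ∀ s ∈ uIcc 0 t, HasDerivAt
      (fun x => x - 2 * r⁻¹ * Real.log (r * (1 + (t - x)) - 1) + r⁻¹ * (r * (1 + (t - x)) - 1)⁻¹)
      (pushOutMajorant r t s ^ 2) s := by
    intro s hs
    rw [uIcc_of_le ht] at hs
    have hu : r * (1 + (t - s)) - 1 ≠ 0 := by
      have := one_lt_mul_one_add hr (sub_nonneg.2 hs.2); linarith
    have hbase := hasDerivAt_pushOutMajorant_denom (r := r) (t := t) s
    refine (((hasDerivAt_id' s).sub ((hbase.log hu).const_mul (2 * r⁻¹))).add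
      ((hbase.inv hu).const_mul r⁻¹)).congr_deriv ?_
    rw [pushOutMajorant]
    field_simp
    ring
  rw [integral_eq_sub_of_hasDerivAt hderiv
    (((continuousOn_pushOutMajorant hr).pow 2).mono Icc_subset_Iic_self |>.intervalIntegrable_of_Icc ht)]
  simp only [sub_self, sub_zero, add_zero, mul_one]
  ring

lemma integral_pushOutMajorant_le (hr : 1 < r) (ht : 0 ≤ t) :
    ∫ s in 0..t, pushOutMajorant r t s ≤ 2 * (1 + t) * (1 + Real.log (r / (r - 1))) := by
  rw [integral_pushOutMajorant hr ht]
  set L := Real.log (r * (1 + t) - 1) - Real.log (r - 1)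
  have hr₁ : 0 < r - 1 := by linarith
  have hL₀ : 0 ≤ L := sub_nonneg.2 (Real.log_le_log hr₁ (by nlinarith))
  have hL : L ≤ t + Real.log (r / (r - 1)) := by
    have h₁ : Real.log (r * (1 + t) - 1) ≤ Real.log r + Real.log (1 + t) := by
      rw [← Real.log_mul (by positivity) (by positivity)]
      exact Real.log_le_log (by nlinarith) (by linarith)
    have h₂ := Real.log_le_sub_one_of_pos (show 0 < 1 + t by positivity)
    rw [Real.log_div (by positivity) hr₁.ne']
    linarith
  have hm : 0 ≤ Real.log (r / (r - 1)) :=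
    Real.log_nonneg ((one_le_div hr₁).2 (by linarith))
  have hrL : r⁻¹ * L ≤ L := mul_le_of_le_one_left hL₀ (inv_le_one_of_one_le₀ hr.le)
  nlinarith [mul_nonneg ht hm]

lemma integral_pushOutMajorant_sq_le (hr : 1 < r) (ht : 0 ≤ t) :
    ∫ s in 0..t, pushOutMajorant r t s ^ 2 ≤ 2 * (1 + t) * (r / (r - 1)) := by
  rw [integral_pushOutMajorant_sq hr ht]
  set L := Real.log (r * (1 + t) - 1) - Real.log (r - 1)
  have hr₁ : 0 < r - 1 := by linarith
  have hm : r / (r - 1) = 1 + (r - 1)⁻¹ := by field_simp; ring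
  have hL₀ : 0 ≤ L := sub_nonneg.2 (Real.log_le_log hr₁ (by nlinarith))
  have h2L : 2 * L ≤ 1 + t * (r / (r - 1)) := by
    have hq : 0 < (r * (1 + t) - 1) / (r - 1) := div_pos (by nlinarith) hr₁
    have := Real.log_le_half_self hq
    rw [Real.log_div (by nlinarith) hr₁.ne', show (r * (1 + t) - 1) / (r - 1) = 1 + t * (r / (r - 1)) by
      field_simp; ring] at this
    linarith
  have hr₀ : r⁻¹ ≤ 1 := inv_le_one_of_one_le₀ hr.le
  have hrL : r⁻¹ * L ≤ L := mul_le_of_le_one_left hL₀ hr₀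
  have hinv : r⁻¹ * ((r - 1)⁻¹ - (r * (1 + t) - 1)⁻¹) ≤ (r - 1)⁻¹ :=
    calc r⁻¹ * ((r - 1)⁻¹ - (r * (1 + t) - 1)⁻¹) ≤ r⁻¹ * (r - 1)⁻¹ := by
          gcongr
          exact sub_le_self _ (inv_nonneg.2 (by nlinarith))
      _ ≤ (r - 1)⁻¹ := mul_le_of_le_one_left (inv_nonneg.2 hr₁.le) hr₀
  have hm₁ : 1 ≤ r / (r - 1) := hm ▸ le_add_of_nonneg_right (inv_nonneg.2 hr₁.le)
  nlinarith [mul_le_mul_of_nonneg_left hm₁ ht]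

end PushOutMajorant

section Estimates

variable {r t : ℝ} {f : ℝ → ℝ}

theorem integral_le_of_le_pushOutMajorant (hr : 1 < r) (ht : 0 ≤ t)
    (hf : ContinuousOn f (Icc 0 t)) (hfg : ∀ s ∈ Icc 0 t, f s ≤ pushOutMajorant r t s) :
    ∫ s in 0..t, f s ≤ 2 * (1 + t) * (1 + Real.log (r / (r - 1))) :=
  (integral_mono_on ht (hf.intervalIntegrable_of_Icc ht)
    ((continuousOn_pushOutMajorant hr).mono Icc_subset_Iic_self |>.intervalIntegrable_of_Icc ht)
    hfg).trans (integral_pushOutMajorant_le hr ht)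

theorem integral_rpow_le_of_le_pushOutMajorant (hr : 1 < r) (ht : 0 ≤ t)
    (hf : ContinuousOn f (Icc 0 t)) (hf₀ : ∀ s ∈ Icc 0 t, 0 ≤ f s)
    (hfg : ∀ s ∈ Icc 0 t, f s ≤ pushOutMajorant r t s) {p : ℝ} (hp : 2 ≤ p) :
    ∫ s in 0..t, f s ^ p ≤ 2 * (1 + t) * (r / (r - 1)) ^ (p - 1) := by
  set m := r / (r - 1)
  have hm : 0 < m := div_pos (by linarith) (by linarith)
  have hpoint : ∀ s ∈ Icc 0 t, f s ^ p ≤ m ^ (p - 2) * pushOutMajorant r t s ^ 2 := by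
    intro s hs
    have hfm : f s ≤ m := (hfg s hs).trans (pushOutMajorant_le hr hs.2)
    calc f s ^ p = f s ^ (p - 2) * f s ^ 2 := by
          rw [← Real.rpow_natCast, ← Real.rpow_add' (hf₀ s hs) (by push_cast; linarith)]
          norm_num
      _ ≤ m ^ (p - 2) * pushOutMajorant r t s ^ 2 := by
          have := hf₀ s hs
          gcongr
          exact hfg s hs
  have hmaj : IntervalIntegrable (fun s => pushOutMajorant r t s ^ 2) MeasureTheory.volume 0 t :=
    ((continuousOn_pushOutMajorant hr).pow 2).mono Icc_subset_Iic_self |>.intervalIntegrable_of_Icc ht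
  calc ∫ s in 0..t, f s ^ p ≤ ∫ s in 0..t, m ^ (p - 2) * pushOutMajorant r t s ^ 2 :=
        integral_mono_on ht ((hf.rpow_const fun _ _ => Or.inr (by linarith)).intervalIntegrable_of_Icc ht)
          (hmaj.const_mul _) hpoint
    _ = m ^ (p - 2) * ∫ s in 0..t, pushOutMajorant r t s ^ 2 := integral_const_mul _ _
    _ ≤ m ^ (p - 2) * (2 * (1 + t) * m) := by
        gcongr
        exact integral_pushOutMajorant_sq_le hr ht
    _ = 2 * (1 + t) * m ^ (p - 1) := by
        rw [show p - 1 = p - 2 + 1 by ring, Real.rpow_add_one hm.ne']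
        ring

end Estimates

/-- Push-out estimate, case `ζ < 0`, `t < t_ζ = |ζ|⁻¹`: with `r_s = e^{τ_t - τ_s} r`,
`∫₀^t (r_s/(r_s-1))^p ds ≤ 2(1+t)(r/(r-1))^{p-1}` for every `p ≥ 2`, and
`∫₀^t (r_s/(r_s-1)) ds ≤ 2(1+t)(1 + log(r/(r-1)))`. -/
theorem stmt7 (ζ r t : ℝ) (hζ : ζ < 0) (hr : 1 < r) (ht0 : 0 ≤ t) (ht : t < |ζ|⁻¹) :
    (∀ p : ℝ, 2 ≤ p →
      (∫ s in (0:ℝ)..t,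
          (Real.exp (tauLK ζ t - tauLK ζ s) * r /
              (Real.exp (tauLK ζ t - tauLK ζ s) * r - 1)) ^ p)
        ≤ 2 * (1 + t) * (r / (r - 1)) ^ (p - 1)) ∧
    (∫ s in (0:ℝ)..t,
        Real.exp (tauLK ζ t - tauLK ζ s) * r /
          (Real.exp (tauLK ζ t - tauLK ζ s) * r - 1))
      ≤ 2 * (1 + t) * (1 + Real.log (r / (r - 1))) := by
  have ht' : 0 < 1 + ζ * t := one_add_mul_pos_of_lt_abs_inv hζ ht
  have hρ : ∀ s ∈ Icc 0 t, r * (1 + (t - s)) ≤ Real.exp (tauLK ζ t - tauLK ζ s) * r :=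
    fun s hs => by
      rw [mul_comm]
      gcongr
      exact one_add_sub_le_exp_tauLK_sub hζ hs.1 hs.2 ht'
  have hρ₁ : ∀ s ∈ Icc 0 t, 1 < r * (1 + (t - s)) :=
    fun s hs => one_lt_mul_one_add hr (sub_nonneg.2 hs.2)
  have hx₁ : ∀ s ∈ Icc 0 t, 1 < Real.exp (tauLK ζ t - tauLK ζ s) * r :=
    fun s hs => (hρ₁ s hs).trans_le (hρ s hs)
  have hmaj : ∀ s ∈ Icc 0 t, Real.exp (tauLK ζ t - tauLK ζ s) * r /
      (Real.exp (tauLK ζ t - tauLK ζ s) * r - 1) ≤ pushOutMajorant r t s :=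
    fun s hs => div_sub_one_le_one_add_inv (hρ₁ s hs) (hρ s hs)
  have hcont : ContinuousOn (fun s => Real.exp (tauLK ζ t - tauLK ζ s) * r /
      (Real.exp (tauLK ζ t - tauLK ζ s) * r - 1)) (Icc 0 t) := by
    have hτ : ContinuousOn (tauLK ζ) (Icc 0 t) :=
      (continuousOn_tauLK ζ).mono fun s hs =>
        (show 0 < 1 + ζ * s by nlinarith [hs.1, hs.2]).ne'
    have hx : ContinuousOn (fun s => Real.exp (tauLK ζ t - tauLK ζ s) * r) (Icc 0 t) := by
      fun_prop
    exact hx.div (hx.sub continuousOn_const) fun s hs => (sub_pos.2 (hx₁ s hs)).ne'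
  have hf₀ : ∀ s ∈ Icc 0 t, 0 ≤ Real.exp (tauLK ζ t - tauLK ζ s) * r /
      (Real.exp (tauLK ζ t - tauLK ζ s) * r - 1) :=
    fun s hs => div_nonneg (by linarith [hx₁ s hs]) (sub_pos.2 (hx₁ s hs)).le
  exact ⟨fun p hp => integral_rpow_le_of_le_pushOutMajorant hr ht0 hcont hf₀ hmaj hp,
    integral_le_of_le_pushOutMajorant hr ht0 hcont hmaj⟩
end

section
/- For all ζ ∈ ℝ and T ∈ [0, t_ζ) there is a constant C(ζ,T) < ∞ with the following property. Let σ > 0, δ₀ ∈ (0,1/2], t ∈ [0,T], τ ≥ 0 and φ̂ ∈ S₁; write ψ̂(z) = φ̂(z) − z and ψ^cap = τ − τ_t, and suppose |ψ^cap| ≤ δ₀ and |ψ̂′(e^{σ} e^{iθ})| ≤ δ₀ for all θ ∈ [0,2π). Then |(1/2π) ∫₀^{2π} e^{−ζτ} |φ̂′(e^{σ} e^{iθ})|^{−ζ} dθ − e^{−ζτ_t} + ζ e^{−ζτ_t} ψ^cap| ≤ C δ₀². -/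
open Complex

/-!
Write `φ̂' = 1 + w` on the circle `|z| = e^σ` and `ψ = τ - τ_t`. Since `e^{-ζτ_t} = (1 + ζt)⁻¹`
is bounded uniformly for `t ∈ [0, T]`, it suffices to expand
`e^{-ζψ} |1 + w|^{-ζ} = exp (-ζ (ψ + log |1 + w|))`: as `log |1 + w| = Re w + O(|w|²)`, this is
`1 - ζψ - ζ Re w + O(δ₀²)` pointwise, with a constant depending only on `ζ`. The linear term
`Re w` has mean zero: the mean of `ψ̂'` over the circle is `(2πi)⁻¹ ∮ ψ̂(z) / z² dz`, which
vanishes term by term because the Laurent series of `ψ̂` has no positive powers.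
-/

open Metric

namespace Real

theorem abs_log_le_two_mul_abs_sub_one {a : ℝ} (ha : |a - 1| ≤ 1 / 2) :
    |log a| ≤ 2 * |a - 1| := by
  have h := abs_log_sub_add_sum_range_le (x := 1 - a) (by rw [abs_sub_comm]; linarith) 0
  simp only [Finset.sum_range_zero, zero_add, sub_sub_cancel, abs_sub_comm 1 a] at h
  refine h.trans ?_
  rw [div_le_iff₀ (by linarith)]
  nlinarith [abs_nonneg (a - 1)]

theorem abs_log_sub_sub_one_le {a : ℝ} (ha : |a - 1| ≤ 1 / 2) :
    |log a - (a - 1)| ≤ 2 * (a - 1) ^ 2 := by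
  have h := abs_log_sub_add_sum_range_le (x := 1 - a) (by rw [abs_sub_comm]; linarith) 1
  simp only [Finset.sum_range_one, sub_sub_cancel, abs_sub_comm 1 a] at h
  norm_num at h
  rw [show log a - (a - 1) = 1 - a + log a by ring, show (a - 1) ^ 2 = (1 - a) ^ 2 by ring]
  refine h.trans ?_
  rw [div_le_iff₀ (by linarith)]
  nlinarith [sq_nonneg (1 - a)]

theorem abs_exp_sub_one_sub_le_sq_mul_exp_abs (x : ℝ) : |exp x - 1 - x| ≤ x ^ 2 * exp |x| := by
  have h := Complex.norm_exp_sub_sum_le_norm_mul_exp x 2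
  simp only [Finset.sum_range_succ, Finset.sum_range_zero] at h
  norm_num at h
  rw [sub_sub, ← norm_eq_abs]
  exact_mod_cast h

end Real

theorem Complex.abs_norm_sub_re_le (d : ℂ) : |‖d‖ - d.re| ≤ 2 * ‖d - 1‖ ^ 2 := by
  set w := d - 1
  have hd : d = 1 + w := by ring
  have hsq : ‖d‖ ^ 2 = 1 + 2 * w.re + ‖w‖ ^ 2 := by
    rw [hd, Complex.sq_norm, Complex.sq_norm, normSq_add]; simp; ring
  have h1 : |‖d‖ - 1| ≤ ‖w‖ := by simpa using abs_norm_sub_norm_le d 1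
  have h2 : |w.re * (1 - ‖d‖)| ≤ ‖w‖ ^ 2 := by
    rw [abs_mul, abs_sub_comm, sq]
    exact mul_le_mul (abs_re_le_norm w) h1 (abs_nonneg _) (norm_nonneg _)
  have key : (‖d‖ - d.re) * (‖d‖ + 1) = w.re * (1 - ‖d‖) + ‖w‖ ^ 2 := by
    have : d.re = 1 + w.re := by simp [w]
    rw [this]; linear_combination hsq
  rw [abs_of_nonneg (sub_nonneg.2 (re_le_norm d))]
  nlinarith [(abs_le.1 h2).2, re_le_norm d, norm_nonneg d]

theorem abs_exp_mul_norm_rpow_sub_one_add_le {ζ ψ δ : ℝ} {d : ℂ} (hδ : δ ≤ 1 / 2)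
    (hψ : |ψ| ≤ δ) (hd : ‖d - 1‖ ≤ δ) :
    |Real.exp (-(ζ * ψ)) * ‖d‖ ^ (-ζ) - 1 + ζ * ψ + ζ * (d - 1).re|
      ≤ (9 * ζ ^ 2 * Real.exp (3 * |ζ| / 2) + 4 * |ζ|) * δ ^ 2 := by
  have hδ0 : 0 ≤ δ := (abs_nonneg ψ).trans hψ
  set a := ‖d‖
  have ha : |a - 1| ≤ δ := by simpa using (abs_norm_sub_norm_le d 1).trans hd
  have ha0 : 0 < a := by linarith [(abs_le.1 ha).1]
  have hlog := Real.abs_log_le_two_mul_abs_sub_one (ha.trans hδ)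
  have hlog' := Real.abs_log_sub_sub_one_le (ha.trans hδ)
  have hre : |a - d.re| ≤ 2 * δ ^ 2 :=
    (Complex.abs_norm_sub_re_le d).trans (by gcongr)
  set x := -(ζ * (ψ + Real.log a))
  have hx : |x| ≤ 3 * |ζ| * δ := by
    rw [abs_neg, abs_mul]
    calc |ζ| * |ψ + Real.log a| ≤ |ζ| * (δ + 2 * δ) := by
          gcongr; exact (abs_add_le _ _).trans (by linarith)
      _ = 3 * |ζ| * δ := by ring
  have hexp : |Real.exp x - 1 - x| ≤ 9 * ζ ^ 2 * Real.exp (3 * |ζ| / 2) * δ ^ 2 := by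
    refine (Real.abs_exp_sub_one_sub_le_sq_mul_exp_abs x).trans ?_
    have hx2 : x ^ 2 ≤ (3 * |ζ| * δ) ^ 2 := by
      rw [← sq_abs x]; exact pow_le_pow_left₀ (abs_nonneg x) hx 2
    have hxe : Real.exp |x| ≤ Real.exp (3 * |ζ| / 2) :=
      Real.exp_le_exp.2 (by nlinarith [abs_nonneg ζ])
    calc x ^ 2 * Real.exp |x| ≤ (3 * |ζ| * δ) ^ 2 * Real.exp (3 * |ζ| / 2) := by gcongr
      _ = 9 * ζ ^ 2 * Real.exp (3 * |ζ| / 2) * δ ^ 2 := by rw [← sq_abs ζ]; ring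
  have hrpow : Real.exp (-(ζ * ψ)) * a ^ (-ζ) = Real.exp x := by
    rw [Real.rpow_def_of_pos ha0, ← Real.exp_add]; simp only [x]; ring_nf
  have hlin : |Real.log a - (a - 1) + (a - d.re)| ≤ 4 * δ ^ 2 := by
    have : (a - 1) ^ 2 ≤ δ ^ 2 := by rw [← sq_abs]; exact pow_le_pow_left₀ (abs_nonneg _) ha 2
    linarith [abs_add_le (Real.log a - (a - 1)) (a - d.re)]
  have hsplit : Real.exp (-(ζ * ψ)) * a ^ (-ζ) - 1 + ζ * ψ + ζ * (d - 1).re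
      = (Real.exp x - 1 - x) - ζ * ((Real.log a - (a - 1)) + (a - d.re)) := by
    rw [hrpow, Complex.sub_re, Complex.one_re]; ring
  rw [hsplit]
  calc _ ≤ |Real.exp x - 1 - x| + |ζ| * |Real.log a - (a - 1) + (a - d.re)| := by
        rw [← abs_mul]; exact abs_sub _ _
    _ ≤ 9 * ζ ^ 2 * Real.exp (3 * |ζ| / 2) * δ ^ 2 + |ζ| * (4 * δ ^ 2) := by gcongr
    _ = _ := by ring

theorem circleIntegral_sub_inv_smul_deriv_eq {g : ℂ → ℂ} {U : Set ℂ} {c : ℂ} {r : ℝ}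
    (hU : IsOpen U) (hg : DifferentiableOn ℂ g U) (hr : 0 < r) (hrU : sphere c r ⊆ U) :
    (∮ z in C(c, r), (z - c)⁻¹ • deriv g z) = ∮ z in C(c, r), ((z - c) ^ 2)⁻¹ • g z := by
  have hzc : ∀ z ∈ sphere c r, z - c ≠ 0 := fun z hz =>
    sub_ne_zero.2 (ne_of_mem_sphere hz hr.ne')
  have hint₁ : CircleIntegrable (fun z => (z - c)⁻¹ • deriv g z) c r :=
    ((continuousOn_id.sub continuousOn_const).inv₀ hzc).smul
      ((hg.analyticOnNhd hU).deriv.continuousOn.mono hrU) |>.circleIntegrable hr.le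
  have hint₂ : CircleIntegrable (fun z => ((z - c) ^ 2)⁻¹ • g z) c r :=
    (((continuousOn_id.sub continuousOn_const).pow 2).inv₀ fun z hz =>
      pow_ne_zero 2 (hzc z hz)).smul (hg.continuousOn.mono hrU) |>.circleIntegrable hr.le
  rw [← sub_eq_zero, ← circleIntegral.integral_sub hint₁ hint₂]
  refine circleIntegral.integral_eq_zero_of_hasDerivWithinAt (f := fun z => g z / (z - c))
    hr.le fun z hz => ?_
  have hgz := (hg.differentiableAt (hU.mem_nhds (hrU hz))).hasDerivAt
  convert (hgz.fun_div ((hasDerivAt_id z).sub_const c) (hzc z hz)).hasDerivWithinAt using 1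
  · rfl
  · simp only [smul_eq_mul, id, mul_one]
    field_simp [hzc z hz]

theorem circleIntegral_sub_sq_inv_smul_eq_zero_of_hasSum {g : ℂ → ℂ} {a : ℕ → ℂ} {c : ℂ}
    {r : ℝ} (hr : 0 < r) (hg : ∀ z ∈ sphere c r, HasSum (fun k => a k / (z - c) ^ k) (g z)) :
    (∮ z in C(c, r), ((z - c) ^ 2)⁻¹ • g z) = 0 := by
  have hsum : Summable fun k => ‖a k‖ / r ^ k := by
    have := (hg (c + r) (by simp [abs_of_pos hr])).summable.norm
    simpa [abs_of_pos hr] using this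
  have hterm : ∀ k, (∮ z in C(c, r), ((z - c) ^ 2)⁻¹ • (a k / (z - c) ^ k)) = 0 := by
    intro k
    have h := circleIntegral.integral_sub_zpow_of_ne (n := -((k : ℤ) + 2)) (by omega) c c r
    rw [← mul_zero (a k), ← h, ← circleIntegral.integral_const_mul]
    refine circleIntegral.integral_congr hr.le fun z hz => ?_
    have : z - c ≠ 0 := sub_ne_zero.2 (ne_of_mem_sphere hz hr.ne')
    simp only [smul_eq_mul, zpow_neg]
    rw [show (k : ℤ) + 2 = ((k + 2 : ℕ) : ℤ) by push_cast; ring, zpow_natCast]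
    field_simp
    ring
  have htermwise : HasSum (fun k => ∮ z in C(c, r), ((z - c) ^ 2)⁻¹ • (a k / (z - c) ^ k))
      (∮ z in C(c, r), ((z - c) ^ 2)⁻¹ • g z) := by
    simp only [circleIntegral]
    refine intervalIntegral.hasSum_integral_of_dominated_convergence
      (fun k _ => r * ((r ^ 2)⁻¹ * (‖a k‖ / r ^ k))) (fun k => ?_) (fun k => ?_) ?_ ?_ ?_
    · exact (Measurable.aestronglyMeasurable (by fun_prop))
    · refine Filter.Eventually.of_forall fun θ _ => ?_
      simp [deriv_circleMap, abs_of_pos hr]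
    · exact Filter.Eventually.of_forall fun θ _ => (hsum.mul_left _).mul_left _
    · exact intervalIntegrable_const
    · refine Filter.Eventually.of_forall fun θ _ => ?_
      exact ((hg _ (circleMap_mem_sphere c hr.le θ)).const_smul _).const_smul _
  simp only [hterm] at htermwise
  exact htermwise.unique hasSum_zero

namespace Real

theorem circleAverage_deriv_eq_zero_of_hasSum {g : ℂ → ℂ} {a : ℕ → ℂ} {U : Set ℂ} {c : ℂ}
    {r : ℝ} (hU : IsOpen U) (hg : DifferentiableOn ℂ g U) (hr : 0 < r) (hrU : sphere c r ⊆ U)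
    (hsum : ∀ z ∈ sphere c r, HasSum (fun k => a k / (z - c) ^ k) (g z)) :
    circleAverage (deriv g) c r = 0 := by
  rw [circleAverage_eq_circleIntegral hr.ne',
    circleIntegral_sub_inv_smul_deriv_eq hU hg hr hrU,
    circleIntegral_sub_sq_inv_smul_eq_zero_of_hasSum hr hsum, smul_zero]

theorem abs_circleAverage_sub_le {f : ℂ → ℝ} {c : ℂ} {r a M : ℝ}
    (hf : CircleIntegrable f c r) (h : ∀ z ∈ sphere c |r|, |f z - a| ≤ M) :
    |circleAverage f c r - a| ≤ M := by
  have hup := circleAverage_mono_on_of_le_circle (a := a + M) hf fun z hz => by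
    linarith [(abs_le.1 (h z hz)).2]
  have hlow := circleAverage_mono (circleIntegrable_const (a - M) c r) hf
    fun z hz => by linarith [(abs_le.1 (h z hz)).1]
  rw [circleAverage_const] at hlow
  rw [abs_sub_le_iff]
  constructor <;> linarith

end Real

theorem abs_circleAverage_exp_mul_norm_rpow_sub_le {f : ℂ → ℂ} {c : ℂ} {r ζ τ τ₀ δ : ℝ}
    (hf : ContinuousOn f (sphere c |r|)) (hmean : Real.circleAverage (fun z => f z - 1) c r = 0)
    (hδ : δ ≤ 1 / 2) (hτ : |τ - τ₀| ≤ δ) (hfδ : ∀ z ∈ sphere c |r|, ‖f z - 1‖ ≤ δ) :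
    |Real.circleAverage (fun z => Real.exp (-(ζ * τ)) * ‖f z‖ ^ (-ζ)) c r - Real.exp (-(ζ * τ₀))
        + ζ * Real.exp (-(ζ * τ₀)) * (τ - τ₀)|
      ≤ Real.exp (-(ζ * τ₀)) * (9 * ζ ^ 2 * Real.exp (3 * |ζ| / 2) + 4 * |ζ|) * δ ^ 2 := by
  set E := Real.exp (-(ζ * τ₀))
  have hf0 : ∀ z ∈ sphere c |r|, f z ≠ 0 := fun z hz h0 => by
    have := hfδ z hz; simp [h0] at this; linarith
  have hF : CircleIntegrable (fun z => Real.exp (-(ζ * τ)) * ‖f z‖ ^ (-ζ)) c r :=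
    (continuousOn_const.mul (hf.norm.rpow_const fun z hz =>
      Or.inl (norm_ne_zero_iff.2 (hf0 z hz)))).circleIntegrable'
  have hint : CircleIntegrable (fun z => f z - 1) c r :=
    (hf.sub continuousOn_const).circleIntegrable'
  have hL : CircleIntegrable (fun z => ζ * E * (f z - 1).re) c r :=
    (continuousOn_const.mul
      (Complex.continuous_re.comp_continuousOn (hf.sub continuousOn_const))).circleIntegrable'
  have hremean : Real.circleAverage (fun z => (f z - 1).re) c r = 0 := by
    have := Complex.reCLM.circleAverage_comp_comm hint
    rw [hmean, map_zero] at this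
    exact this
  have hlinear_mean :
      Real.circleAverage (fun z => Real.exp (-(ζ * τ)) * ‖f z‖ ^ (-ζ) + ζ * E * (f z - 1).re) c r
        = Real.circleAverage (fun z => Real.exp (-(ζ * τ)) * ‖f z‖ ^ (-ζ)) c r := by
    have hsmul := Real.circleAverage_fun_smul (a := ζ * E) (f := fun z => (f z - 1).re)
      (c := c) (R := r)
    simp only [smul_eq_mul] at hsmul
    rw [Real.circleAverage_fun_add hF hL, hsmul, hremean, mul_zero, add_zero]
  rw [← hlinear_mean, sub_add]
  refine Real.abs_circleAverage_sub_le (hF.add hL) fun z hz => ?_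
  have hpt := abs_exp_mul_norm_rpow_sub_one_add_le (ζ := ζ) hδ hτ (hfδ z hz)
  have hsplit : Real.exp (-(ζ * τ)) = E * Real.exp (-(ζ * (τ - τ₀))) := by
    rw [← Real.exp_add]; ring_nf
  rw [hsplit]
  calc _ = |E * (Real.exp (-(ζ * (τ - τ₀))) * ‖f z‖ ^ (-ζ) - 1 + ζ * (τ - τ₀)
          + ζ * (f z - 1).re)| := by ring_nf
    _ ≤ _ := by
        rw [abs_mul, abs_of_pos (Real.exp_pos _), mul_assoc]
        exact mul_le_mul_of_nonneg_left hpt (Real.exp_pos _).le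

theorem exp_neg_mul_tauLK {ζ t : ℝ} (h : 0 < 1 + ζ * t) :
    Real.exp (-(ζ * tauLK ζ t)) = (1 + ζ * t)⁻¹ := by
  rcases eq_or_ne ζ 0 with rfl | hζ
  · simp [tauLK]
  · rw [tauLK, if_neg hζ, mul_inv_cancel_left₀ hζ, Real.exp_neg, Real.exp_log h]

theorem exp_neg_mul_tauLK_le {ζ T t : ℝ} (hTζ : ζ < 0 → T < |ζ|⁻¹) (ht0 : 0 ≤ t)
    (htT : t ≤ T) :
    Real.exp (-(ζ * tauLK ζ t)) ≤ max 1 (1 + ζ * T)⁻¹ := by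
  rcases le_or_gt 0 ζ with hζ | hζ
  · have h1 : 1 ≤ 1 + ζ * t := by nlinarith
    rw [exp_neg_mul_tauLK (by linarith)]
    exact (inv_le_one_of_one_le₀ h1).trans (le_max_left _ _)
  · have hT : 0 < 1 + ζ * T := by
      have h := mul_lt_mul_of_pos_right (hTζ hζ) (neg_pos.2 hζ)
      rw [abs_of_neg hζ, inv_mul_cancel₀ (by linarith)] at h
      linarith
    have hTt : 1 + ζ * T ≤ 1 + ζ * t := by nlinarith
    rw [exp_neg_mul_tauLK (hT.trans_le hTt)]
    exact (inv_anti₀ hT hTt).trans (le_max_right _ _)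

theorem circleAverage_deriv_sub_one_eq_zero {φ : ℂ → ℂ} {ψc : ℕ → ℂ} {r : ℝ}
    (hφ : DifferentiableOn ℂ φ {z : ℂ | 1 < ‖z‖})
    (hψ : ∀ z : ℂ, 1 < ‖z‖ → HasSum (fun k : ℕ => ψc k / z ^ k) (φ z - z)) (hr : 1 < r) :
    Real.circleAverage (fun z => deriv φ z - 1) 0 r = 0 := by
  have hU : IsOpen {z : ℂ | 1 < ‖z‖} := isOpen_lt continuous_const continuous_norm
  have hrU : sphere (0 : ℂ) r ⊆ {z : ℂ | 1 < ‖z‖} := fun z hz => by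
    rw [mem_sphere_zero_iff_norm] at hz; simp [hz, hr]
  have hderiv :
      Set.EqOn (fun z => deriv φ z - 1) (deriv fun z => φ z - z) (sphere 0 |r|) := by
    intro z hz
    rw [abs_of_pos (by linarith)] at hz
    exact (((hφ.differentiableAt (hU.mem_nhds (hrU hz))).hasDerivAt.sub
      (hasDerivAt_id z)).deriv).symm
  rw [Real.circleAverage_congr_sphere hderiv]
  exact Real.circleAverage_deriv_eq_zero_of_hasSum hU (hφ.sub differentiableOn_id)
    (by linarith) hrU fun z hz => by simpa using hψ z (hrU hz)

theorem stmt17_general (ζ T : ℝ) (hTζ : ζ < 0 → T < |ζ|⁻¹) :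
    ∃ C : ℝ, ∀ (σ δ₀ t τ : ℝ) (φ : ℂ → ℂ) (ψc : ℕ → ℂ),
      0 < σ → 0 < δ₀ → δ₀ ≤ 1 / 2 → 0 ≤ t → t ≤ T → 0 ≤ τ →
      DifferentiableOn ℂ φ {z : ℂ | 1 < ‖z‖} →
      Set.InjOn φ {z : ℂ | 1 < ‖z‖} →
      (∀ z : ℂ, 1 < ‖z‖ → HasSum (fun k : ℕ => ψc k / z ^ k) (φ z - z)) →
      |τ - tauLK ζ t| ≤ δ₀ →
      (∀ θ : ℝ,
        ‖deriv φ (Real.exp σ * Complex.exp (θ * Complex.I)) - 1‖ ≤ δ₀) →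
      |((2 * Real.pi)⁻¹ *
          ∫ θ in (0:ℝ)..(2 * Real.pi),
            Real.exp (-(ζ * τ)) *
              ‖deriv φ (Real.exp σ * Complex.exp (θ * Complex.I))‖ ^ (-ζ))
        - Real.exp (-(ζ * tauLK ζ t))
        + ζ * Real.exp (-(ζ * tauLK ζ t)) * (τ - tauLK ζ t)| ≤ C * δ₀ ^ 2 := by
  refine ⟨max 1 (1 + ζ * T)⁻¹ * (9 * ζ ^ 2 * Real.exp (3 * |ζ| / 2) + 4 * |ζ|), ?_⟩
  intro σ δ₀ t τ φ ψc hσ _ hδ₀ ht0 htT _ hφ _ hψ hτ hderiv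
  have hr : 1 < Real.exp σ := Real.one_lt_exp_iff.2 hσ
  have hU : IsOpen {z : ℂ | 1 < ‖z‖} := isOpen_lt continuous_const continuous_norm
  have hrU : sphere (0 : ℂ) |Real.exp σ| ⊆ {z : ℂ | 1 < ‖z‖} := fun z hz => by
    rw [mem_sphere_zero_iff_norm, abs_of_pos (Real.exp_pos σ)] at hz; simp [hz, hr]
  have hw : ∀ z ∈ sphere (0 : ℂ) |Real.exp σ|, ‖deriv φ z - 1‖ ≤ δ₀ := by
    rintro z hz
    obtain ⟨θ, rfl⟩ := (range_circleMap 0 (Real.exp σ)).symm ▸ hz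
    simpa [circleMap_zero] using hderiv θ
  have h := abs_circleAverage_exp_mul_norm_rpow_sub_le (ζ := ζ)
    ((hφ.analyticOnNhd hU).deriv.continuousOn.mono hrU)
    (circleAverage_deriv_sub_one_eq_zero hφ hψ hr) hδ₀ hτ hw
  simp only [Real.circleAverage, circleMap_zero, smul_eq_mul] at h
  refine h.trans ?_
  gcongr
  exact exp_neg_mul_tauLK_le hTζ ht0 htT

/-- Capacity-drift estimate (Lemma BEST): for `ζ ∈ ℝ` and `T ∈ [0, t_ζ)` there is
`C = C(ζ,T)` such that for `σ > 0`, `δ₀ ∈ (0,1/2]`, `t ∈ [0,T]`, `τ ≥ 0` and `φ̂ ∈ S₁`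
with `|ψ^cap| = |τ - τ_t| ≤ δ₀` and `|ψ̂'(e^σ e^{iθ})| = |φ̂'(e^σ e^{iθ}) - 1| ≤ δ₀` for
all `θ`, one has
`|⨍₀^{2π} e^{-ζτ}|φ̂'(e^σ e^{iθ})|^{-ζ} dθ - e^{-ζτ_t} + ζ e^{-ζτ_t}(τ - τ_t)| ≤ Cδ₀²`. -/
theorem stmt17 (ζ T : ℝ) (hT0 : 0 ≤ T) (hTζ : ζ < 0 → T < |ζ|⁻¹) :
    ∃ C : ℝ, ∀ (σ δ₀ t τ : ℝ) (φ : ℂ → ℂ) (ψc : ℕ → ℂ),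
      0 < σ → 0 < δ₀ → δ₀ ≤ 1 / 2 → 0 ≤ t → t ≤ T → 0 ≤ τ →
      DifferentiableOn ℂ φ {z : ℂ | 1 < ‖z‖} →
      Set.InjOn φ {z : ℂ | 1 < ‖z‖} →
      (∀ z : ℂ, 1 < ‖z‖ → HasSum (fun k : ℕ => ψc k / z ^ k) (φ z - z)) →
      |τ - tauLK ζ t| ≤ δ₀ →
      (∀ θ : ℝ,
        ‖deriv φ (Real.exp σ * Complex.exp (θ * Complex.I)) - 1‖ ≤ δ₀) →
      |((2 * Real.pi)⁻¹ *
          ∫ θ in (0:ℝ)..(2 * Real.pi),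
            Real.exp (-(ζ * τ)) *
              ‖deriv φ (Real.exp σ * Complex.exp (θ * Complex.I))‖ ^ (-ζ))
        - Real.exp (-(ζ * tauLK ζ t))
        + ζ * Real.exp (-(ζ * tauLK ζ t)) * (τ - tauLK ζ t)| ≤ C * δ₀ ^ 2 :=
  stmt17_general ζ T hTζ
end
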